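/- arXiv:2002.00347 — 6 statements merged into one kernel-verified Lean document; each statement's English description precedes it below -/
import Mathlib

section
/- Let 𝒢 be a finite connected simple graph with killing function κ not identically zero, A a one-form on 𝒢, and β ∈ ℝ. Set E^β = P − P^β. Then Tr(G E^β) = Σ_{(x,y) ∈ X×X} G_{xy} P_{yx} (1 − cos(β A_{yx})); in particular Tr(G E^β) is a nonnegative real number. -/
/-!
With the masses `m x = κ x + d x`, detailed balance `m x * P x y = 𝟙[x ∼ y] = m y * P y x` makes
`diag(m) (1 - P)` symmetric, hence also its inverse `G diag(m)⁻¹` (with `G` the Green function),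
so the weights `G x y * P y x` are symmetric. Since `A` is skew, pairing `(x, y)` with `(y, x)`
cancels the imaginary parts `G x y * P y x * sin (β A y x)` of
`Tr(G E^β) = ∑ G x y * P y x * (1 - e^{iβ A y x})`.
Nonnegativity follows from `G ≥ 0`, a minimum principle: if `(1 - P) v ≥ 0` and `v` had a negative
minimum, the minimum would spread along the edges of the connected graph to a killed vertex,
where the row sum of `P` is `< 1`.
-/

open Matrix Finset Complex

theorem sum_sum_eq_zero_of_antisymm {ι M : Type*} [Fintype ι] [AddCommGroup M]
    [IsAddTorsionFree M] (f : ι → ι → M)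
    (hf : ∀ x y, f x y = -f y x) : ∑ x, ∑ y, f x y = 0 := by
  have h : ∑ x, ∑ y, f x y = -∑ x, ∑ y, f x y :=
    calc ∑ x, ∑ y, f x y = ∑ y, ∑ x, f x y := sum_comm
      _ = ∑ y, ∑ x, -f y x := Fintype.sum_congr _ _ fun y => Fintype.sum_congr _ _ fun x => hf x y
      _ = -∑ x, ∑ y, f x y := by simp only [sum_neg_distrib]
  exact self_eq_neg.mp h

theorem sum_sum_mul_one_sub_exp_of_symm {ι : Type*} [Fintype ι] (W θ : ι → ι → ℝ)
    (hW : ∀ x y, W x y = W y x) (hθ : ∀ x y, θ x y = -θ y x) :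
    ∑ x, ∑ y, (W x y : ℂ) * (1 - exp (θ x y * I)) =
      ((∑ x, ∑ y, W x y * (1 - Real.cos (θ x y)) : ℝ) : ℂ) := by
  have hsin : ∑ x, ∑ y, W x y * Real.sin (θ x y) = 0 :=
    sum_sum_eq_zero_of_antisymm _ fun x y => by rw [hW, hθ, Real.sin_neg, mul_neg]
  have hterm : ∀ x y, (W x y : ℂ) * (1 - exp (θ x y * I)) =
      ((W x y * (1 - Real.cos (θ x y)) : ℝ) : ℂ) - ((W x y * Real.sin (θ x y) : ℝ) : ℂ) * I := by
    intro x y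
    rw [exp_mul_I, ← ofReal_cos, ← ofReal_sin]
    push_cast
    ring
  simp only [hterm, sum_sub_distrib, ← sum_mul, ← ofReal_sum, hsin, ofReal_zero, zero_mul, sub_zero]

section

variable {V : Type*} [Fintype V]

structure IsTransientTransition (G : SimpleGraph V) (P : Matrix V V ℝ) : Prop where
  connected : G.Connected
  nonneg : ∀ x y, 0 ≤ P x y
  pos_of_adj : ∀ x y, G.Adj x y → 0 < P x y
  sum_row_le_one : ∀ x, ∑ y, P x y ≤ 1
  exists_sum_row_lt_one : ∃ z, ∑ y, P z y < 1

namespace IsTransientTransition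

variable [DecidableEq V] {G : SimpleGraph V} {P : Matrix V V ℝ}

theorem nonneg_of_one_sub_mulVec_nonneg (hP : IsTransientTransition G P) {v : V → ℝ}
    (hv : 0 ≤ (1 - P) *ᵥ v) : 0 ≤ v := by
  obtain ⟨z, hz⟩ := hP.exists_sum_row_lt_one
  obtain ⟨x₀, -, hmin⟩ := exists_min_image univ v ⟨z, mem_univ z⟩
  by_contra hneg
  have hx₀ : v x₀ < 0 := by
    by_contra! h
    exact hneg fun x => h.trans (hmin x (mem_univ x))
  have hterm : ∀ x y, 0 ≤ P x y * (v y - v x₀) :=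
    fun x y => mul_nonneg (hP.nonneg x y) (sub_nonneg.2 (hmin y (mem_univ y)))
  have hexcess : ∀ x, v x = v x₀ → ∑ y, P x y * (v y - v x₀) ≤ (1 - ∑ y, P x y) * v x₀ := by
    intro x hx
    have hvx : ∑ y, P x y * v y ≤ v x := by
      have := hv x
      rwa [Pi.zero_apply, sub_mulVec, one_mulVec, Pi.sub_apply, sub_nonneg] at this
    simp only [mul_sub, sum_sub_distrib, ← sum_mul, sub_mul, one_mul]
    linarith
  set S : Set V := {x | v x = v x₀}
  have hS : ∀ x ∈ S, ∀ y, G.Adj x y → y ∈ S := by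
    intro x hx y hxy
    have hsum : ∑ y, P x y * (v y - v x₀) = 0 :=
      le_antisymm ((hexcess x hx).trans (mul_nonpos_of_nonneg_of_nonpos
        (sub_nonneg.2 (hP.sum_row_le_one x)) hx₀.le)) (sum_nonneg fun y _ => hterm x y)
    have hy := (sum_eq_zero_iff_of_nonneg fun y _ => hterm x y).1 hsum y (mem_univ y)
    exact sub_eq_zero.1 ((mul_eq_zero.1 hy).resolve_left (hP.pos_of_adj x y hxy).ne')
  have hzS : z ∈ S := by
    by_contra hzS
    obtain ⟨w⟩ := hP.connected.preconnected x₀ z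
    obtain ⟨d, -, hd₁, hd₂⟩ := w.exists_boundary_dart S rfl hzS
    exact hd₂ (hS _ hd₁ _ d.adj)
  linarith [hexcess z hzS, mul_neg_of_pos_of_neg (sub_pos.2 hz) hx₀,
    sum_nonneg fun y (_ : y ∈ univ) => hterm z y]

theorem isUnit_det_one_sub (hP : IsTransientTransition G P) : IsUnit (1 - P).det := by
  refine isUnit_iff_ne_zero.2 fun hdet => ?_
  obtain ⟨v, hv0, hv⟩ := exists_mulVec_eq_zero_iff.2 hdet
  have hpos := hP.nonneg_of_one_sub_mulVec_nonneg hv.ge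
  have hneg := hP.nonneg_of_one_sub_mulVec_nonneg (v := -v) (by rw [mulVec_neg, hv, neg_zero])
  exact hv0 (le_antisymm (neg_nonneg.1 hneg) hpos)

theorem inv_one_sub_nonneg (hP : IsTransientTransition G P) (x y : V) :
    0 ≤ (1 - P)⁻¹ x y := by
  have hcol : (1 - P) *ᵥ ((1 - P)⁻¹ *ᵥ Pi.single y 1) = Pi.single y 1 := by
    rw [mulVec_mulVec, mul_nonsing_inv _ hP.isUnit_det_one_sub, one_mulVec]
  have := hP.nonneg_of_one_sub_mulVec_nonneg (hcol ▸ Pi.single_nonneg.2 zero_le_one) x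
  rwa [mulVec_single_one] at this

end IsTransientTransition

section RandomWalk

variable (G : SimpleGraph V) [DecidableRel G.Adj] {m : V → ℝ} {P : Matrix V V ℝ}

theorem sum_transition_row (hP : ∀ x y, P x y = if G.Adj x y then 1 / m x else 0) (x : V) :
    ∑ y, P x y = G.degree x / m x := by
  rw [Fintype.sum_congr _ _ (hP x), ← sum_filter, sum_const, ← G.neighborFinset_eq_filter,
    G.card_neighborFinset_eq_degree, nsmul_eq_mul, mul_one_div]

theorem diagonal_mul_transition [DecidableEq V] (hm : ∀ x, m x ≠ 0)
    (hP : ∀ x y, P x y = if G.Adj x y then 1 / m x else 0) :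
    diagonal m * P = G.adjMatrix ℝ := by
  ext x y
  rw [diagonal_mul, hP, SimpleGraph.adjMatrix_apply]
  split_ifs
  · exact mul_one_div_cancel (hm x)
  · exact mul_zero _

theorem inv_one_sub_mul_transition_comm [DecidableEq V] (hm : ∀ x, m x ≠ 0)
    (hP : ∀ x y, P x y = if G.Adj x y then 1 / m x else 0) (x y : V) :
    (1 - P)⁻¹ x y * P y x = (1 - P)⁻¹ y x * P x y := by
  have hK : (diagonal m * (1 - P))⁻¹.IsSymm := by
    rw [Matrix.mul_sub, Matrix.mul_one, diagonal_mul_transition G hm hP]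
    exact ((isSymm_diagonal m).sub G.isSymm_adjMatrix).inv
  have hdiag : IsUnit (diagonal m).det := by
    rw [det_diagonal]
    exact isUnit_iff_ne_zero.2 (prod_ne_zero_iff.2 fun x _ => hm x)
  have hinv : (1 - P)⁻¹ = (diagonal m * (1 - P))⁻¹ * diagonal m := by
    rw [Matrix.mul_inv_rev, Matrix.mul_assoc, nonsing_inv_mul _ hdiag, Matrix.mul_one]
  rw [hinv, mul_diagonal, mul_diagonal, hP, hP, hK.apply y x]
  by_cases hxy : G.Adj x y
  · rw [if_pos hxy.symm, if_pos hxy, mul_assoc, mul_assoc, mul_one_div_cancel (hm y),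
      mul_one_div_cancel (hm x)]
  · rw [if_neg fun h => hxy h.symm, if_neg hxy, mul_zero, mul_zero]

theorem mass_pos (hconn : G.Connected) {κ : V → ℝ} (hκnn : ∀ x, 0 ≤ κ x) (hκ : κ ≠ 0) (x : V) :
    0 < κ x + G.degree x := by
  obtain ⟨z, hz⟩ := Function.ne_iff.mp hκ
  rcases eq_or_ne x z with rfl | hxz
  · positivity [(hκnn x).lt_of_ne' hz]
  · have : Nontrivial V := ⟨⟨x, z, hxz⟩⟩
    have := hconn.preconnected.degree_pos_of_nontrivial x
    positivity [hκnn x]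

theorem isTransientTransition (hconn : G.Connected) {κ : V → ℝ} (hκnn : ∀ x, 0 ≤ κ x)
    (hκ : κ ≠ 0) (hP : ∀ x y, P x y = if G.Adj x y then 1 / (κ x + G.degree x) else 0) :
    IsTransientTransition G P := by
  have hm := mass_pos G hconn hκnn hκ
  refine ⟨hconn, fun x y => ?_, fun x y hxy => ?_, fun x => ?_, ?_⟩
  · rw [hP]
    split_ifs
    exacts [(one_div_pos.2 (hm x)).le, le_rfl]
  · rw [hP, if_pos hxy]
    exact one_div_pos.2 (hm x)
  · rw [sum_transition_row G hP, div_le_one (hm x)]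
    linarith [hκnn x]
  · obtain ⟨z, hz⟩ := Function.ne_iff.mp hκ
    refine ⟨z, ?_⟩
    rw [sum_transition_row G hP, div_lt_one (hm z)]
    linarith [(hκnn z).lt_of_ne' hz]

end RandomWalk

end

theorem trace_green_mul_perturbation_general
    {V : Type*} [Fintype V] [DecidableEq V]
    (G : SimpleGraph V) [DecidableRel G.Adj] (hconn : G.Connected)
    (κ : V → ℝ) (hκnn : ∀ x, 0 ≤ κ x) (hκ : κ ≠ 0)
    (P : Matrix V V ℝ)
    (hP : ∀ x y, P x y = if G.Adj x y then 1 / (κ x + (G.degree x : ℝ)) else 0)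
    (Gr : Matrix V V ℝ) (hGr : Gr = (1 - P)⁻¹)
    (A : Matrix V V ℝ)
    (hAskew : ∀ x y, A x y = - A y x)
    (β : ℝ)
    (Pβ : Matrix V V ℂ)
    (hPβ : ∀ x y, Pβ x y =
      if G.Adj x y then Complex.exp (Complex.I * β * A x y) / ((κ x + (G.degree x : ℝ) : ℝ) : ℂ)
      else 0)
    (Eβ : Matrix V V ℂ) (hEβ : Eβ = P.map Complex.ofReal - Pβ) :
    Matrix.trace (Gr.map Complex.ofReal * Eβ) =
      ((∑ x : V, ∑ y : V, Gr x y * P y x * (1 - Real.cos (β * A y x)) : ℝ) : ℂ) ∧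
    0 ≤ ∑ x : V, ∑ y : V, Gr x y * P y x * (1 - Real.cos (β * A y x)) := by
  have hm x := (mass_pos G hconn hκnn hκ x).ne'
  have hEβ_apply x y : Eβ x y = P x y * (1 - exp ((β * A x y : ℝ) * I)) := by
    rw [hEβ, Matrix.sub_apply, map_apply, hPβ, hP,
      show I * β * A x y = ((β * A x y : ℝ) : ℂ) * I by push_cast; ring]
    split_ifs
    · push_cast
      ring
    · simp
  have htrace : Matrix.trace (Gr.map ofReal * Eβ) =
      ∑ x, ∑ y, ((Gr x y * P y x : ℝ) : ℂ) * (1 - exp ((β * A y x : ℝ) * I)) := by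
    simp only [Matrix.trace, Matrix.diag, mul_apply, map_apply, hEβ_apply, ofReal_mul, mul_assoc]
  subst hGr
  refine ⟨htrace.trans (sum_sum_mul_one_sub_exp_of_symm _ (fun x y => β * A y x)
    (inv_one_sub_mul_transition_comm G hm hP) fun x y => by rw [hAskew]; ring), ?_⟩
  have hT := isTransientTransition G hconn hκnn hκ hP
  exact sum_nonneg fun x _ => sum_nonneg fun y _ => mul_nonneg
    (mul_nonneg (hT.inv_one_sub_nonneg x y) (hT.nonneg y x)) (sub_nonneg.2 (Real.cos_le_one _))

/-- With `E^β = P - P^β`, one has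
`Tr(G E^β) = ∑_{x,y} G_{xy} P_{yx} (1 - cos(β A_{yx}))`; in particular `Tr(G E^β)` is a
nonnegative real number. -/
theorem trace_green_mul_perturbation
    {V : Type*} [Fintype V] [DecidableEq V]
    (G : SimpleGraph V) [DecidableRel G.Adj] (hconn : G.Connected)
    (κ : V → ℝ) (hκnn : ∀ x, 0 ≤ κ x) (hκ : κ ≠ 0)
    (P : Matrix V V ℝ)
    (hP : ∀ x y, P x y = if G.Adj x y then 1 / (κ x + (G.degree x : ℝ)) else 0)
    (Gr : Matrix V V ℝ) (hGr : Gr = (1 - P)⁻¹)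
    (A : Matrix V V ℝ)
    (hAskew : ∀ x y, A x y = - A y x)
    (hAsupp : ∀ x y, ¬ G.Adj x y → A x y = 0)
    (β : ℝ)
    (Pβ : Matrix V V ℂ)
    (hPβ : ∀ x y, Pβ x y =
      if G.Adj x y then Complex.exp (Complex.I * β * A x y) / ((κ x + (G.degree x : ℝ) : ℝ) : ℂ)
      else 0)
    (Eβ : Matrix V V ℂ) (hEβ : Eβ = P.map Complex.ofReal - Pβ) :
    Matrix.trace (Gr.map Complex.ofReal * Eβ) =
      ((∑ x : V, ∑ y : V, Gr x y * P y x * (1 - Real.cos (β * A y x)) : ℝ) : ℂ) ∧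
    0 ≤ ∑ x : V, ∑ y : V, Gr x y * P y x * (1 - Real.cos (β * A y x)) :=
  trace_green_mul_perturbation_general G hconn κ hκnn hκ P hP Gr hGr A hAskew β Pβ hPβ Eβ hEβ
end

section
/- Let 𝒢 be a finite connected simple graph with killing function κ not identically zero and A a one-form on 𝒢. Set E^β = P − P^β. Then lim_{β→0} β^{−2} Tr(G E^β) = (1/2) Tr((P ⊙ A^{⊙2}) G). -/
open Matrix Filter Topology

/-!
The matrix `D (1 - P)`, with `D = diag(κ + deg)`, is symmetric, hence so is `D G`; on edges this
says that `Q x y = G x y * P y x` is symmetric. Expanding the trace,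
`Tr(G E^β) = ∑ Q x y (1 - exp(iβ A y x))`, and since `A` is skew, swapping `x` and `y` turns this
sum into its complex conjugate, so it equals `∑ Q x y (1 - cos(β A y x))`. Finally
`(1 - cos(β a)) / β² = (a² / 2) sinc(β a / 2)²`, which tends to `a² / 2`.
-/

lemma one_sub_cos_mul_div_sq (a : ℝ) {β : ℝ} (hβ : β ≠ 0) :
    (1 - Real.cos (β * a)) / β ^ 2 = a ^ 2 / 2 * Real.sinc (β * a / 2) ^ 2 := by
  rcases eq_or_ne a 0 with rfl | ha
  · simp
  have hhalf : β * a / 2 ≠ 0 := by positivity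
  have hcos : Real.cos (β * a) = 1 - 2 * Real.sin (β * a / 2) ^ 2 := by
    rw [← Real.cos_two_mul_eq_one_sub]
    ring_nf
  rw [Real.sinc_of_ne_zero hhalf, hcos]
  field_simp
  ring

lemma tendsto_one_sub_cos_mul_div_sq (a : ℝ) :
    Tendsto (fun β : ℝ => (1 - Real.cos (β * a)) / β ^ 2) (𝓝[≠] 0) (𝓝 (a ^ 2 / 2)) := by
  have hcont : Continuous fun β : ℝ => a ^ 2 / 2 * Real.sinc (β * a / 2) ^ 2 :=
    continuous_const.mul ((Real.continuous_sinc.comp (by fun_prop)).pow 2)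
  refine ((hcont.tendsto 0).mono_left nhdsWithin_le_nhds).congr' ?_ |>.trans (by simp)
  exact eventually_nhdsWithin_of_forall fun β hβ => (one_sub_cos_mul_div_sq a hβ).symm

lemma tendsto_inv_sq_mul_sum_one_sub_cos {ι : Type*} [Fintype ι] (Q θ : ι → ι → ℝ) :
    Tendsto (fun β : ℝ => (β ^ 2)⁻¹ * ∑ x, ∑ y, Q x y * (1 - Real.cos (β * θ x y))) (𝓝[≠] 0)
      (𝓝 (∑ x, ∑ y, Q x y * (θ x y ^ 2 / 2))) := by
  refine (tendsto_finsetSum _ fun x _ => tendsto_finsetSum _ fun y _ =>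
    (tendsto_one_sub_cos_mul_div_sq (θ x y)).const_mul (Q x y)).congr fun β => ?_
  simp only [Finset.mul_sum]
  exact Finset.sum_congr rfl fun x _ => Finset.sum_congr rfl fun y _ => by ring

lemma sum_mul_one_sub_exp_eq_ofReal {ι : Type*} [Fintype ι] {Q θ : ι → ι → ℝ}
    (hQ : ∀ x y, Q y x = Q x y) (hθ : ∀ x y, θ y x = -θ x y) :
    ∑ x, ∑ y, (Q x y : ℂ) * (1 - Complex.exp (θ x y * Complex.I)) =
      ((∑ x, ∑ y, Q x y * (1 - Real.cos (θ x y)) : ℝ) : ℂ) := by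
  set S := ∑ x, ∑ y, (Q x y : ℂ) * (1 - Complex.exp (θ x y * Complex.I))
  have hswap : S = ∑ x, ∑ y, (Q x y : ℂ) * (1 - Complex.exp (-θ x y * Complex.I)) := by
    rw [Finset.sum_comm]
    refine Finset.sum_congr rfl fun x _ => Finset.sum_congr rfl fun y _ => ?_
    rw [hQ y x, hθ y x, Complex.ofReal_neg]
  have hterm : ∀ x y, (Q x y : ℂ) * (1 - Complex.exp (θ x y * Complex.I)) +
      (Q x y : ℂ) * (1 - Complex.exp (-θ x y * Complex.I)) =
      2 * ((Q x y : ℂ) * (1 - Complex.cos (θ x y))) := fun x y => by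
    linear_combination (Q x y : ℂ) * Complex.two_cos (θ x y)
  have hdouble : 2 * S = 2 * ((∑ x, ∑ y, Q x y * (1 - Real.cos (θ x y)) : ℝ) : ℂ) := by
    push_cast
    calc 2 * S = S + S := two_mul S
      _ = _ := by
        nth_rewrite 2 [hswap]
        simp only [S, ← Finset.sum_add_distrib, hterm, Finset.mul_sum]
  exact mul_left_cancel₀ two_ne_zero hdouble

lemma Matrix.isSymm_mul_nonsing_inv {n R : Type*} [Fintype n] [DecidableEq n] [CommRing R]
    {D M : Matrix n n R} (hD : D.IsSymm) (hDM : (D * M).IsSymm) : (D * M⁻¹).IsSymm := by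
  by_cases hM : IsUnit M.det
  · have hMT : Mᵀ * D = D * M := by rw [← hDM.eq, transpose_mul, hD.eq]
    have hMT_unit : IsUnit Mᵀ.det := by rwa [det_transpose]
    rw [IsSymm, transpose_mul, hD.eq, transpose_nonsing_inv]
    calc Mᵀ⁻¹ * D = Mᵀ⁻¹ * (D * M) * M⁻¹ := by
          rw [Matrix.mul_assoc, Matrix.mul_assoc, mul_nonsing_inv _ hM, Matrix.mul_one]
      _ = D * M⁻¹ := by
          rw [← hMT, ← Matrix.mul_assoc, nonsing_inv_mul _ hMT_unit, Matrix.one_mul]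
  · simp [nonsing_inv_apply_not_isUnit _ hM, IsSymm]

namespace SimpleGraph

variable {V : Type*} [Fintype V] {G : SimpleGraph V} [DecidableRel G.Adj] {κ : V → ℝ}
  {P : Matrix V V ℝ}

lemma killing_add_degree_pos (hκ : ∀ x, 0 ≤ κ x) {x y : V} (h : G.Adj x y) :
    0 < κ x + G.degree x := by
  have : 0 < G.degree x := G.degree_pos_iff_exists_adj x |>.mpr ⟨y, h⟩
  have := hκ x
  positivity

variable (hκ : ∀ x, 0 ≤ κ x)
  (hP : ∀ x y, P x y = if G.Adj x y then 1 / (κ x + (G.degree x : ℝ)) else 0)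
include hκ hP

lemma killing_add_degree_mul_transition_comm (x y : V) :
    (κ x + G.degree x) * P x y = (κ y + G.degree y) * P y x := by
  rw [hP, hP]
  by_cases h : G.Adj x y
  · rw [if_pos h, if_pos h.symm, mul_one_div_cancel (killing_add_degree_pos hκ h).ne',
      mul_one_div_cancel (killing_add_degree_pos hκ h.symm).ne']
  · rw [if_neg h, if_neg (mt Adj.symm h), mul_zero, mul_zero]

lemma isSymm_diagonal_mul_one_sub_transition [DecidableEq V] :
    (diagonal (fun x => κ x + (G.degree x : ℝ)) * (1 - P)).IsSymm := by
  refine IsSymm.ext fun x y => ?_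
  simp only [diagonal_mul, Matrix.sub_apply, one_apply]
  rcases eq_or_ne x y with rfl | hxy
  · rfl
  · simp only [if_neg hxy, if_neg hxy.symm, zero_sub, mul_neg,
      killing_add_degree_mul_transition_comm hκ hP y x]

lemma green_mul_transition_comm [DecidableEq V] (x y : V) :
    (1 - P)⁻¹ x y * P y x = (1 - P)⁻¹ y x * P x y := by
  have hsymm := (isSymm_mul_nonsing_inv (isSymm_diagonal _)
    (isSymm_diagonal_mul_one_sub_transition hκ hP)).apply x y
  simp only [diagonal_mul] at hsymm
  rw [hP, hP]
  by_cases h : G.Adj x y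
  · rw [if_pos h, if_pos h.symm]
    have := killing_add_degree_pos hκ h
    have := killing_add_degree_pos hκ h.symm
    field_simp
    linarith
  · rw [if_neg h, if_neg (mt Adj.symm h), mul_zero, mul_zero]

end SimpleGraph

theorem tendsto_trace_green_perturbation_div_sq_general
    {V : Type*} [Fintype V] [DecidableEq V]
    (G : SimpleGraph V) [DecidableRel G.Adj]
    (κ : V → ℝ) (hκnn : ∀ x, 0 ≤ κ x)
    (P : Matrix V V ℝ)
    (hP : ∀ x y, P x y = if G.Adj x y then 1 / (κ x + (G.degree x : ℝ)) else 0)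
    (Gr : Matrix V V ℝ) (hGr : Gr = (1 - P)⁻¹)
    (A : Matrix V V ℝ)
    (hAskew : ∀ x y, A x y = - A y x)
    (Pβ : ℝ → Matrix V V ℂ)
    (hPβ : ∀ β x y, Pβ β x y =
      if G.Adj x y then Complex.exp (Complex.I * β * A x y) / ((κ x + (G.degree x : ℝ) : ℝ) : ℂ)
      else 0)
    (Eβ : ℝ → Matrix V V ℂ) (hEβ : ∀ β, Eβ β = P.map Complex.ofReal - Pβ β) :
    Tendsto (fun β : ℝ => ((β : ℂ) ^ 2)⁻¹ * Matrix.trace (Gr.map Complex.ofReal * Eβ β))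
      (nhdsWithin 0 {0}ᶜ)
      (nhds (((1 / 2 : ℝ) * Matrix.trace ((P ⊙ (A ⊙ A)) * Gr) : ℝ) : ℂ)) := by
  have hEβ_apply : ∀ β x y, Eβ β x y = P x y * (1 - Complex.exp (β * A x y * Complex.I)) := by
    intro β x y
    rw [hEβ, Matrix.sub_apply, map_apply, hPβ, hP]
    split_ifs <;> push_cast <;> ring
  have htrace : ∀ β : ℝ, trace (Gr.map Complex.ofReal * Eβ β) =
      ((∑ x, ∑ y, Gr x y * P y x * (1 - Real.cos (β * A y x)) : ℝ) : ℂ) := by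
    intro β
    rw [← sum_mul_one_sub_exp_eq_ofReal (Q := fun x y => Gr x y * P y x)
      (fun x y => by subst hGr; exact (G.green_mul_transition_comm hκnn hP x y).symm)
      (fun x y => by rw [hAskew x y, mul_neg])]
    simp only [trace, diag_apply, mul_apply, map_apply, hEβ_apply]
    refine Finset.sum_congr rfl fun x _ => Finset.sum_congr rfl fun y _ => ?_
    push_cast
    ring
  have hvalue : (1 / 2 : ℝ) * trace ((P ⊙ (A ⊙ A)) * Gr) =
      ∑ x, ∑ y, Gr x y * P y x * (A y x ^ 2 / 2) := by
    simp only [trace, diag_apply, mul_apply, hadamard_apply, Finset.mul_sum]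
    rw [Finset.sum_comm]
    exact Finset.sum_congr rfl fun x _ => Finset.sum_congr rfl fun y _ => by ring
  rw [hvalue]
  refine (tendsto_inv_sq_mul_sum_one_sub_cos (fun x y => Gr x y * P y x) (fun x y => A y x)).ofReal
    |>.congr fun β => ?_
  rw [htrace]
  push_cast
  rfl

/-- With `E^β = P - P^β`,
`lim_{β→0} β⁻² Tr(G E^β) = (1/2) Tr((P ⊙ A^{⊙2}) G)`. -/
theorem tendsto_trace_green_perturbation_div_sq
    {V : Type*} [Fintype V] [DecidableEq V]
    (G : SimpleGraph V) [DecidableRel G.Adj] (hconn : G.Connected)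
    (κ : V → ℝ) (hκnn : ∀ x, 0 ≤ κ x) (hκ : κ ≠ 0)
    (P : Matrix V V ℝ)
    (hP : ∀ x y, P x y = if G.Adj x y then 1 / (κ x + (G.degree x : ℝ)) else 0)
    (Gr : Matrix V V ℝ) (hGr : Gr = (1 - P)⁻¹)
    (A : Matrix V V ℝ)
    (hAskew : ∀ x y, A x y = - A y x)
    (hAsupp : ∀ x y, ¬ G.Adj x y → A x y = 0)
    (Pβ : ℝ → Matrix V V ℂ)
    (hPβ : ∀ β x y, Pβ β x y =
      if G.Adj x y then Complex.exp (Complex.I * β * A x y) / ((κ x + (G.degree x : ℝ) : ℝ) : ℂ)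
      else 0)
    (Eβ : ℝ → Matrix V V ℂ) (hEβ : ∀ β, Eβ β = P.map Complex.ofReal - Pβ β) :
    Tendsto (fun β : ℝ => ((β : ℂ) ^ 2)⁻¹ * Matrix.trace (Gr.map Complex.ofReal * Eβ β))
      (nhdsWithin 0 {0}ᶜ)
      (nhds (((1 / 2 : ℝ) * Matrix.trace ((P ⊙ (A ⊙ A)) * Gr) : ℝ) : ℂ)) :=
  tendsto_trace_green_perturbation_div_sq_general G κ hκnn P hP Gr hGr A hAskew Pβ hPβ Eβ hEβ
end

section
/- Let 𝒢 be a finite connected simple graph with killing function κ not identically zero and A a one-form on 𝒢. Set E^β = P − P^β. Then lim_{β→0} β^{−2} Tr(G E^β G E^β) = −Tr((P ⊙ A) G (P ⊙ A) G). -/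
/-!
Write `Pᵝ = P ⊙ exp(iβA)` entrywise. Since `β ↦ exp(iβa)` has derivative `ia` at `0`, the
perturbation satisfies `β⁻¹ Eᵝ → -i (P ⊙ A)`; the expression `β⁻² Tr(G Eᵝ G Eᵝ)` is the
continuous function `M ↦ Tr(G M G M)` evaluated at `β⁻¹ Eᵝ`, so it tends to
`(-i)² Tr(G (P ⊙ A) G (P ⊙ A))`, which is the claim after cycling the trace.
-/

open Matrix Filter Topology Complex

theorem tendsto_inv_mul_one_sub_cexp (a : ℝ) :
    Tendsto (fun β : ℝ => (β : ℂ)⁻¹ * (1 - exp (I * β * a))) (𝓝[≠] 0) (𝓝 (-(I * a))) := by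
  have hderiv : HasDerivAt (fun β : ℝ => exp (I * β * a)) (I * a) 0 := by
    have hcast : HasDerivAt (fun β : ℝ => (β : ℂ)) 1 0 := by
      simpa using (hasDerivAt_id (0 : ℝ)).ofReal_comp
    simpa using ((hcast.const_mul I).mul_const (a : ℂ)).cexp
  refine (hasDerivAt_iff_tendsto_slope.mp hderiv).neg.congr fun β => ?_
  simp only [slope, vsub_eq_sub, sub_zero, real_smul, ofReal_inv, ofReal_zero, mul_zero,
    zero_mul, exp_zero]
  ring

theorem tendsto_inv_smul_sub_hadamard_cexp {V : Type*} (P A : Matrix V V ℝ) :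
    Tendsto
      (fun β : ℝ => (β : ℂ)⁻¹ •
        (P.map ofReal - P.map ofReal ⊙ A.map fun a => exp (I * β * a)))
      (𝓝[≠] 0) (𝓝 (-I • (P ⊙ A).map ofReal)) := by
  refine tendsto_pi_nhds.2 fun x => tendsto_pi_nhds.2 fun y => ?_
  convert (tendsto_inv_mul_one_sub_cexp (A x y)).const_mul (P x y : ℂ) using 1
  · ext β
    simp only [Matrix.smul_apply, Matrix.sub_apply, hadamard_apply, map_apply, smul_eq_mul]
    ring
  · simp only [Matrix.smul_apply, map_apply, hadamard_apply, smul_eq_mul, ofReal_mul]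
    congr 1
    ring

theorem tendsto_inv_sq_mul_trace_mul_mul_mul {α 𝕜 n : Type*} [Fintype n] [Field 𝕜]
    [TopologicalSpace 𝕜] [IsTopologicalRing 𝕜] {l : Filter α} (c : α → 𝕜)
    (M L : Matrix n n 𝕜) {E : α → Matrix n n 𝕜}
    (hE : Tendsto (fun t => (c t)⁻¹ • E t) l (𝓝 L)) :
    Tendsto (fun t => (c t ^ 2)⁻¹ * trace (M * E t * M * E t)) l
      (𝓝 (trace (M * L * M * L))) := by
  have hcont : Continuous fun X : Matrix n n 𝕜 => trace (M * X * M * X) :=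
    (((continuous_const.matrix_mul continuous_id).matrix_mul continuous_const).matrix_mul
      continuous_id).matrix_trace
  refine ((hcont.tendsto L).comp hE).congr fun t => ?_
  simp only [Function.comp_apply, Matrix.mul_smul, Matrix.smul_mul, smul_smul, trace_smul,
    smul_eq_mul]
  rw [pow_two, mul_inv]

theorem trace_map_ofReal_mul_neg_I_smul {n : Type*} [Fintype n] (M Q : Matrix n n ℝ) :
    trace (M.map ofReal * (-I • Q.map ofReal) * M.map ofReal * (-I • Q.map ofReal))
      = ((-trace (Q * M * Q * M) : ℝ) : ℂ) := by
  have hmap : M.map ofReal * Q.map ofReal * M.map ofReal * Q.map ofReal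
      = (M * Q * M * Q).map ofRealHom := by
    simp only [Matrix.map_mul]
    rfl
  have hcyc : trace (M * Q * M * Q) = trace (Q * M * Q * M) := by
    rw [trace_mul_comm]
    simp only [Matrix.mul_assoc]
  simp only [Matrix.mul_smul, Matrix.smul_mul, smul_smul, trace_smul, smul_eq_mul, hmap,
    ← AddMonoidHom.map_trace ofRealHom, hcyc, ofRealHom_eq_coe, ofReal_neg, neg_mul_neg, I_mul_I]
  ring

theorem tendsto_trace_green_perturbation_sq_div_sq_general
    {V : Type*} [Fintype V]
    (G : SimpleGraph V) [DecidableRel G.Adj]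
    (κ : V → ℝ)
    (P : Matrix V V ℝ)
    (hP : ∀ x y, P x y = if G.Adj x y then 1 / (κ x + (G.degree x : ℝ)) else 0)
    (Gr : Matrix V V ℝ)
    (A : Matrix V V ℝ)
    (Pβ : ℝ → Matrix V V ℂ)
    (hPβ : ∀ β x y, Pβ β x y =
      if G.Adj x y then Complex.exp (Complex.I * β * A x y) / ((κ x + (G.degree x : ℝ) : ℝ) : ℂ)
      else 0)
    (Eβ : ℝ → Matrix V V ℂ) (hEβ : ∀ β, Eβ β = P.map Complex.ofReal - Pβ β) :
    Tendsto
      (fun β : ℝ => ((β : ℂ) ^ 2)⁻¹ *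
        Matrix.trace (Gr.map Complex.ofReal * Eβ β * Gr.map Complex.ofReal * Eβ β))
      (nhdsWithin 0 {0}ᶜ)
      (nhds ((- Matrix.trace ((P ⊙ A) * Gr * (P ⊙ A) * Gr) : ℝ) : ℂ)) := by
  have hPβ_eq : ∀ β : ℝ, Pβ β = P.map ofReal ⊙ A.map fun a => exp (I * β * a) := by
    intro β
    ext x y
    rw [hPβ, hadamard_apply, map_apply, map_apply, hP]
    split_ifs <;> simp [div_eq_inv_mul]
  have hE : Tendsto (fun β : ℝ => (β : ℂ)⁻¹ • Eβ β) (𝓝[≠] 0)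
      (𝓝 (-I • (P ⊙ A).map ofReal)) := by
    simpa only [hEβ, hPβ_eq] using tendsto_inv_smul_sub_hadamard_cexp P A
  have := tendsto_inv_sq_mul_trace_mul_mul_mul (fun β : ℝ => (β : ℂ)) (Gr.map ofReal) _ hE
  rwa [trace_map_ofReal_mul_neg_I_smul] at this

/-- With `E^β = P - P^β`,
`lim_{β→0} β⁻² Tr(G E^β G E^β) = - Tr((P ⊙ A) G (P ⊙ A) G)`. -/
theorem tendsto_trace_green_perturbation_sq_div_sq
    {V : Type*} [Fintype V] [DecidableEq V]
    (G : SimpleGraph V) [DecidableRel G.Adj] (hconn : G.Connected)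
    (κ : V → ℝ) (hκnn : ∀ x, 0 ≤ κ x) (hκ : κ ≠ 0)
    (P : Matrix V V ℝ)
    (hP : ∀ x y, P x y = if G.Adj x y then 1 / (κ x + (G.degree x : ℝ)) else 0)
    (Gr : Matrix V V ℝ) (hGr : Gr = (1 - P)⁻¹)
    (A : Matrix V V ℝ)
    (hAskew : ∀ x y, A x y = - A y x)
    (hAsupp : ∀ x y, ¬ G.Adj x y → A x y = 0)
    (Pβ : ℝ → Matrix V V ℂ)
    (hPβ : ∀ β x y, Pβ β x y =
      if G.Adj x y then Complex.exp (Complex.I * β * A x y) / ((κ x + (G.degree x : ℝ) : ℝ) : ℂ)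
      else 0)
    (Eβ : ℝ → Matrix V V ℂ) (hEβ : ∀ β, Eβ β = P.map Complex.ofReal - Pβ β) :
    Tendsto
      (fun β : ℝ => ((β : ℂ) ^ 2)⁻¹ *
        Matrix.trace (Gr.map Complex.ofReal * Eβ β * Gr.map Complex.ofReal * Eβ β))
      (nhdsWithin 0 {0}ᶜ)
      (nhds ((- Matrix.trace ((P ⊙ A) * Gr * (P ⊙ A) * Gr) : ℝ) : ℂ)) :=
  tendsto_trace_green_perturbation_sq_div_sq_general G κ P hP Gr A Pβ hPβ Eβ hEβ
end

section
/- Fix λ > 0 and d > 0. Define g: ℝ → ℝ by g(β) = β′(2π − β′)/(4π²), where β′ ∈ [0, 2π) is the representative of β modulo 2π. Let ψ: ℝ → ℂ be any function continuous at 0 with ψ(0) = 1. Then for every s ∈ ℝ, lim_{δ → 0⁺} ψ(s/log δ) · (d/δ)^{−λ g(s/log δ)} = exp(−(λ/(2π)) |s|). (The right-hand side is the characteristic function of a Cauchy random variable with location parameter 0 and scale parameter λ/(2π); this is the analytic core of the Spitzer-type law stating that W^δ_λ(z)/log δ, the total winding around a point z of all Brownian loop soup loops of diameter at least δ divided by log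 δ, converges in distribution to such a Cauchy variable as δ → 0, given that the characteristic function of the winding of loops of diameter between δ and d is (d/δ)^{−λ g(β)} and ψ is the characteristic function of the winding of the loops of diameter at least d.) -/
/-! Write `L = log δ`, which tends to `-∞`, and `β = s / L`, which tends to `0`. For `|β| < 2π`
the representative `β'` is `β` or `β + 2π`, so `g(β) = |β|(2π - |β|)/(4π²)` and
`g(s/L) · L = -|s|(2π - |s/L|)/(4π²) → -|s|/(2π)`. Hence the logarithm of `(d/δ)^{-λ g(β)}`,
namely `-λ g(s/L)(log d - L) = λ (g(s/L) · L)(1 - log d / L)`, tends to `-λ|s|/(2π)`, while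
`ψ(s/L) → ψ 0 = 1`. -/

open Filter Real

/-- The exponent `g(β) = β'(2π - β')/(4π²)` where `β' ∈ [0, 2π)` is the representative
of `β` modulo `2π`. -/
noncomputable def windingExponent (β : ℝ) : ℝ :=
  (2 * Real.pi * Int.fract (β / (2 * Real.pi))) *
      (2 * Real.pi - 2 * Real.pi * Int.fract (β / (2 * Real.pi))) / (4 * Real.pi ^ 2)

open Topology

lemma windingExponent_of_abs_lt {β : ℝ} (hβ : |β| < 2 * π) :
    windingExponent β = |β| * (2 * π - |β|) / (4 * π ^ 2) := by
  have hπ : 0 < 2 * π := by positivity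
  rcases le_or_gt 0 β with hβ0 | hβ0
  · have hfract : Int.fract (β / (2 * π)) = β / (2 * π) := by
      rw [abs_of_nonneg hβ0] at hβ
      rw [Int.fract_eq_self]
      exact ⟨div_nonneg hβ0 hπ.le, (div_lt_one hπ).2 hβ⟩
    rw [windingExponent, hfract, abs_of_nonneg hβ0]
    field_simp
  · have hfract : Int.fract (β / (2 * π)) = β / (2 * π) + 1 := by
      rw [abs_of_neg hβ0] at hβ
      rw [Int.fract_eq_iff]
      have hlower : -1 < β / (2 * π) := by rw [lt_div_iff₀ hπ]; linarith
      have hupper : β / (2 * π) < 0 := div_neg_of_neg_of_pos hβ0 hπ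
      exact ⟨by linarith, by linarith, -1, by push_cast; ring⟩
    rw [windingExponent, hfract, abs_of_neg hβ0]
    field_simp
    ring

lemma tendsto_windingExponent_div_mul_atBot (s : ℝ) :
    Tendsto (fun L => windingExponent (s / L) * L) atBot (𝓝 (-|s| / (2 * π))) := by
  have hlim : Tendsto (fun L : ℝ => -|s| * (2 * π + |s| * L⁻¹) / (4 * π ^ 2)) atBot
      (𝓝 (-|s| * (2 * π + |s| * 0) / (4 * π ^ 2))) :=
    ((tendsto_inv_atBot_zero.const_mul |s|).const_add _ |>.const_mul _).div_const _
  rw [mul_zero, add_zero, show -|s| * (2 * π) / (4 * π ^ 2) = -|s| / (2 * π) by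
    field_simp; ring] at hlim
  refine hlim.congr' ?_
  filter_upwards [eventually_lt_atBot (-|s| / (2 * π)), eventually_lt_atBot 0] with L hL hL0
  have hsL : |s / L| = -(|s| * L⁻¹) := by
    rw [abs_div, abs_of_neg hL0, div_neg, div_eq_mul_inv]
  have hsmall : |s / L| < 2 * π := by
    rw [hsL, neg_lt, ← div_eq_mul_inv, lt_div_iff_of_neg hL0]
    rw [lt_div_iff₀ (by positivity)] at hL
    linarith
  rw [windingExponent_of_abs_lt hsmall, hsL]
  field_simp [hL0.ne]
  ring

lemma tendsto_neg_mul_windingExponent_div_mul_sub_atBot (lam c s : ℝ) :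
    Tendsto (fun L => -(lam * windingExponent (s / L)) * (c - L)) atBot
      (𝓝 (-(lam / (2 * π)) * |s|)) := by
  have hlim : Tendsto (fun L => lam * (windingExponent (s / L) * L) * (1 - c * L⁻¹)) atBot
      (𝓝 (lam * (-|s| / (2 * π)) * (1 - c * 0))) :=
    ((tendsto_windingExponent_div_mul_atBot s).const_mul lam).mul
      ((tendsto_inv_atBot_zero.const_mul c).const_sub 1)
  rw [show lam * (-|s| / (2 * π)) * (1 - c * 0) = -(lam / (2 * π)) * |s| by ring] at hlim
  refine hlim.congr' ?_
  filter_upwards [eventually_lt_atBot 0] with L hL0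
  field_simp [hL0.ne]
  ring

theorem spitzer_type_law_loop_soup_general
    (lam d : ℝ) (hd : 0 < d)
    (ψ : ℝ → ℂ) (hψ_cont : ContinuousAt ψ 0) (hψ0 : ψ 0 = 1) (s : ℝ) :
    Tendsto
      (fun δ : ℝ =>
        ψ (s / Real.log δ) *
          (((d / δ) ^ (-(lam * windingExponent (s / Real.log δ))) : ℝ) : ℂ))
      (nhdsWithin 0 (Set.Ioi 0))
      (nhds ((Real.exp (-(lam / (2 * Real.pi)) * |s|) : ℝ) : ℂ)) := by
  have hψ : Tendsto (fun δ => ψ (s / log δ)) (𝓝[>] 0) (𝓝 1) :=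
    hψ0 ▸ hψ_cont.tendsto.comp (tendsto_const_nhds.div_atBot tendsto_log_nhdsGT_zero)
  have hpow : Tendsto (fun δ => (d / δ) ^ (-(lam * windingExponent (s / log δ)))) (𝓝[>] 0)
      (𝓝 (exp (-(lam / (2 * π)) * |s|))) := by
    refine ((continuous_exp.tendsto _).comp
      ((tendsto_neg_mul_windingExponent_div_mul_sub_atBot lam (log d) s).comp
        tendsto_log_nhdsGT_zero)).congr' ?_
    filter_upwards [self_mem_nhdsWithin] with δ (hδ : 0 < δ)
    rw [rpow_def_of_pos (div_pos hd hδ), log_div hd.ne' hδ.ne', mul_comm]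
    rfl
  simpa using hψ.mul ((Complex.continuous_ofReal.tendsto _).comp hpow)

/-- Spitzer-type law for windings of the Brownian loop soup, analytic core:
for `λ, d > 0` and any `ψ : ℝ → ℂ` continuous at `0` with `ψ(0) = 1`,
`ψ(s/log δ) (d/δ)^{-λ g(s/log δ)} → exp(-(λ/(2π))|s|)` as `δ → 0⁺`. -/
theorem spitzer_type_law_loop_soup
    (lam d : ℝ) (hlam : 0 < lam) (hd : 0 < d)
    (ψ : ℝ → ℂ) (hψ_cont : ContinuousAt ψ 0) (hψ0 : ψ 0 = 1) (s : ℝ) :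
    Tendsto
      (fun δ : ℝ =>
        ψ (s / Real.log δ) *
          (((d / δ) ^ (-(lam * windingExponent (s / Real.log δ))) : ℝ) : ℂ))
      (nhdsWithin 0 (Set.Ioi 0))
      (nhds ((Real.exp (-(lam / (2 * Real.pi)) * |s|) : ℝ) : ℂ)) :=
  spitzer_type_law_loop_soup_general lam d hd ψ hψ_cont hψ0 s
end

section
/- Let 𝒢 be a finite connected simple graph with killing function κ not identically zero whose transition matrix P is symmetric, let d ≥ 1, and let (A_{xy}) be a Hermitian connection on 𝒢. Set E^β = P ⊗ I_d − B^β. Then lim_{β→0} β^{−2} Tr( (G ⊗ I_d) E^β ) = (1/2) Σ_{(x,y): x∼y} G_{xy} P_{xy} Tr(A_{xy}²), the sum being over ordered pairs of adjacent vertices. -/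
open Matrix Kronecker Filter
open Topology NormedSpace

/-!
The `(x, x)` diagonal block of `(G ⊗ I) E^β` has trace `∑_y G_{xy} Tr(E^β_{yx})`, and the block
`E^β_{xy}` is `P_{xy} (I - e^{iβ A_{xy}})` on edges and zero elsewhere. Averaging over the two
orientations of each edge, using that `G` and `P` are symmetric and `A_{yx} = -A_{xy}`, turns the
edge term into `½ G_{xy} P_{xy} Tr(2 - e^{iβ A_{xy}} - e^{-iβ A_{xy}})`, in which the first-order
terms cancel. In a Banach algebra `2 - e^X - e^{-X} = -(e^X - 1)² e^{-X}` and
`t⁻¹ (e^{tX} - 1) → X`, so `t⁻² (2 - e^{tX} - e^{-tX}) → -X²`; for `X = iA` this is `A²`.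
-/

section BanachAlgebra

variable {𝔸 : Type*} [NormedRing 𝔸] [CompleteSpace 𝔸]

theorem two_sub_exp_sub_exp_neg [NormedAlgebra ℚ 𝔸] (x : 𝔸) :
    2 - exp x - exp (-x) = -((exp x - 1) ^ 2 * exp (-x)) := by
  have h : exp x * exp (-x) = 1 := by
    rw [← NormedSpace.exp_add_of_commute (Commute.neg_right (Commute.refl x)), add_neg_cancel,
      exp_zero]
  have hexpand : (exp x - 1) ^ 2 * exp (-x) =
      exp x * (exp x * exp (-x)) - 2 * (exp x * exp (-x)) + exp (-x) := by noncomm_ring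
  rw [hexpand, h, mul_one, mul_one]
  abel

theorem tendsto_inv_smul_exp_smul_sub_one [NormedAlgebra ℝ 𝔸] (x : 𝔸) :
    Tendsto (fun t : ℝ => t⁻¹ • (exp (t • x) - 1)) (𝓝[≠] 0) (𝓝 x) := by
  have h := (hasDerivAt_exp_smul_const (𝕂 := ℝ) x 0).tendsto_slope
  rw [zero_smul, exp_zero, one_mul] at h
  refine h.congr fun t => ?_
  simp [slope_def_module]

theorem tendsto_inv_sq_smul_two_sub_exp_sub_exp_neg [NormedAlgebra ℚ 𝔸] [NormedAlgebra ℝ 𝔸]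
    (x : 𝔸) :
    Tendsto (fun t : ℝ => (t ^ 2)⁻¹ • (2 - exp (t • x) - exp (-(t • x)))) (𝓝[≠] 0)
      (𝓝 (-(x ^ 2))) := by
  have hexp : Tendsto (fun t : ℝ => exp (-(t • x))) (𝓝[≠] 0) (𝓝 1) := by
    have h := ((tendsto_id (x := 𝓝 (0 : ℝ))).smul_const x).neg.exp
    rw [zero_smul, neg_zero, exp_zero] at h
    exact h.mono_left nhdsWithin_le_nhds
  have h := (((tendsto_inv_smul_exp_smul_sub_one x).pow 2).mul hexp).neg
  rw [mul_one] at h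
  refine h.congr fun t => ?_
  rw [two_sub_exp_sub_exp_neg, smul_pow, smul_mul_assoc, inv_pow, smul_neg]

end BanachAlgebra

namespace Matrix

variable {m n R : Type*} [Fintype m] [Fintype n] [DecidableEq n]

theorem trace_kronecker_one_mul [NonAssocSemiring R] (M : Matrix m m R)
    (N : Matrix (m × n) (m × n) R) :
    trace ((M ⊗ₖ (1 : Matrix n n R)) * N) = ∑ x, ∑ y, M x y * ∑ i, N (y, i) (x, i) := by
  simp only [trace, diag_apply, mul_apply, Fintype.sum_prod_type, kroneckerMap_apply, one_apply,
    mul_ite, mul_one, mul_zero, ite_mul, zero_mul, Finset.sum_ite_eq, Finset.mem_univ, if_true,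
    Finset.mul_sum]
  exact Finset.sum_congr rfl fun x _ => Finset.sum_comm

theorem tendsto_inv_sq_mul_trace_two_sub_exp_sub_exp_neg (M : Matrix n n ℂ) :
    Tendsto (fun β : ℝ => ((β : ℂ) ^ 2)⁻¹ *
        trace (2 - exp ((Complex.I * β) • M) - exp ((Complex.I * β) • -M)))
      (𝓝[≠] 0) (𝓝 (trace (M ^ 2))) := by
  let := Matrix.linftyOpNormedRing (n := n) (α := ℂ)
  let := Matrix.linftyOpNormedAlgebra (n := n) (α := ℂ) (R := ℚ)
  let := Matrix.linftyOpNormedAlgebra (n := n) (α := ℂ) (R := ℝ)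
  have h := ((continuous_id.matrix_trace (n := n) (R := ℂ)).tendsto _).comp
    (tendsto_inv_sq_smul_two_sub_exp_sub_exp_neg (Complex.I • M))
  rw [smul_pow, Complex.I_sq, neg_smul, one_smul, neg_neg] at h
  refine h.congr fun β => ?_
  have hsmul : ∀ N : Matrix n n ℂ, β • Complex.I • N = (Complex.I * β) • N := fun N => by
    rw [← Complex.coe_smul, smul_smul, mul_comm]
  rw [Function.comp_apply, id, trace_smul, hsmul, ← smul_neg, Complex.real_smul]
  push_cast
  -- the two sides differ only by the (definitionally equal) instances coming from the chosen norm
  rfl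

end Matrix

theorem SimpleGraph.sum_ite_adj_eq_half_sum_ite_adj_add_swap {V K : Type*} [Fintype V]
    (G : SimpleGraph V) [DecidableRel G.Adj] [DivisionRing K] [CharZero K] (f : V → V → K) :
    ∑ x, ∑ y, (if G.Adj x y then f x y else 0) =
      1 / 2 * ∑ x, ∑ y, (if G.Adj x y then f x y + f y x else 0) := by
  have hswap : ∑ x, ∑ y, (if G.Adj x y then f y x else 0) =
      ∑ x, ∑ y, (if G.Adj x y then f x y else 0) := by
    rw [Finset.sum_comm]
    simp only [G.adj_comm]
  simp only [ite_add_zero, Finset.sum_add_distrib, hswap]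
  rw [← two_mul, ← mul_assoc, one_div, inv_mul_cancel₀ two_ne_zero, one_mul]

theorem tendsto_trace_green_perturbation_holonomy_general
    {V : Type*} [Fintype V] [DecidableEq V]
    (G : SimpleGraph V) [DecidableRel G.Adj]
    (κ : V → ℝ)
    (P : Matrix V V ℝ)
    (hP : ∀ x y, P x y = if G.Adj x y then 1 / (κ x + (G.degree x : ℝ)) else 0)
    (hPsymm : ∀ x y, P x y = P y x)
    (Gr : Matrix V V ℝ) (hGr : Gr = (1 - P)⁻¹)
    (d : ℕ)
    (A : V → V → Matrix (Fin d) (Fin d) ℂ)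
    (hAskew : ∀ x y, G.Adj x y → A y x = - A x y)
    (B : ℝ → Matrix (V × Fin d) (V × Fin d) ℂ)
    (hB : ∀ β x y i j, B β (x, i) (y, j) =
      if G.Adj x y then (P x y : ℂ) * (NormedSpace.exp ((Complex.I * β) • A x y)) i j
      else 0)
    (Eβ : ℝ → Matrix (V × Fin d) (V × Fin d) ℂ)
    (hEβ : ∀ β, Eβ β = (P.map Complex.ofReal) ⊗ₖ (1 : Matrix (Fin d) (Fin d) ℂ) - B β) :
    Tendsto
      (fun β : ℝ => ((β : ℂ) ^ 2)⁻¹ *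
        Matrix.trace
          (((Gr.map Complex.ofReal) ⊗ₖ (1 : Matrix (Fin d) (Fin d) ℂ)) * Eβ β))
      (nhdsWithin 0 {0}ᶜ)
      (nhds ((1 / 2 : ℂ) *
        ∑ x : V, ∑ y : V,
          if G.Adj x y then ((Gr x y * P x y : ℝ) : ℂ) * Matrix.trace (A x y ^ 2) else 0)) := by
  have hGr_symm : Gr.IsSymm := hGr ▸ (isSymm_one.sub (IsSymm.ext fun x y => hPsymm y x)).inv
  have hblock : ∀ β x y, ∑ i, Eβ β (x, i) (y, i) =
      if G.Adj x y then (P x y : ℂ) * trace (1 - exp ((Complex.I * β) • A x y)) else 0 := by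
    intro β x y
    split_ifs with hxy
    · simp [hEβ, hB, hxy, trace, Finset.mul_sum, mul_sub, mul_comm]
    · simp [hEβ, hB, hxy, hP]
  have htrace : ∀ β : ℝ, ((β : ℂ) ^ 2)⁻¹ *
      trace (((Gr.map Complex.ofReal) ⊗ₖ (1 : Matrix (Fin d) (Fin d) ℂ)) * Eβ β) =
      1 / 2 * ∑ x, ∑ y, if G.Adj x y then ((Gr x y * P x y : ℝ) : ℂ) * (((β : ℂ) ^ 2)⁻¹ *
        trace (2 - exp ((Complex.I * β) • A x y) - exp ((Complex.I * β) • -A x y))) else 0 := by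
    intro β
    conv_lhs =>
      rw [trace_kronecker_one_mul, Finset.sum_comm]
      simp only [hblock, map_apply, hGr_symm.apply, Finset.mul_sum, mul_ite, mul_zero]
    rw [G.sum_ite_adj_eq_half_sum_ite_adj_add_swap]
    congr 1
    refine Finset.sum_congr rfl fun x _ => Finset.sum_congr rfl fun y _ => ?_
    split_ifs with hxy
    · rw [hGr_symm.apply x y, ← hPsymm x y, hAskew x y hxy, ← mul_add, ← mul_add,
        ← mul_add, ← trace_add, sub_add_sub_comm, one_add_one_eq_two, sub_sub]
      push_cast
      ring
    · rfl
  simp only [htrace]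
  refine tendsto_const_nhds.mul (tendsto_finsetSum _ fun x _ => tendsto_finsetSum _ fun y _ => ?_)
  split_ifs
  · exact (tendsto_inv_sq_mul_trace_two_sub_exp_sub_exp_neg (A x y)).const_mul _
  · exact tendsto_const_nhds

/-- With `E^β = P ⊗ I_d - B^β`,
`lim_{β→0} β⁻² Tr((G ⊗ I_d) E^β) = (1/2) ∑_{x∼y} G_{xy} P_{xy} Tr(A_{xy}²)`. -/
theorem tendsto_trace_green_perturbation_holonomy
    {V : Type*} [Fintype V] [DecidableEq V]
    (G : SimpleGraph V) [DecidableRel G.Adj] (hconn : G.Connected)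
    (κ : V → ℝ) (hκnn : ∀ x, 0 ≤ κ x) (hκ : κ ≠ 0)
    (P : Matrix V V ℝ)
    (hP : ∀ x y, P x y = if G.Adj x y then 1 / (κ x + (G.degree x : ℝ)) else 0)
    (hPsymm : ∀ x y, P x y = P y x)
    (Gr : Matrix V V ℝ) (hGr : Gr = (1 - P)⁻¹)
    (d : ℕ) (hd : 1 ≤ d)
    (A : V → V → Matrix (Fin d) (Fin d) ℂ)
    (hAherm : ∀ x y, G.Adj x y → (A x y).IsHermitian)
    (hAskew : ∀ x y, G.Adj x y → A y x = - A x y)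
    (B : ℝ → Matrix (V × Fin d) (V × Fin d) ℂ)
    (hB : ∀ β x y i j, B β (x, i) (y, j) =
      if G.Adj x y then (P x y : ℂ) * (NormedSpace.exp ((Complex.I * β) • A x y)) i j
      else 0)
    (Eβ : ℝ → Matrix (V × Fin d) (V × Fin d) ℂ)
    (hEβ : ∀ β, Eβ β = (P.map Complex.ofReal) ⊗ₖ (1 : Matrix (Fin d) (Fin d) ℂ) - B β) :
    Tendsto
      (fun β : ℝ => ((β : ℂ) ^ 2)⁻¹ *
        Matrix.trace
          (((Gr.map Complex.ofReal) ⊗ₖ (1 : Matrix (Fin d) (Fin d) ℂ)) * Eβ β))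
      (nhdsWithin 0 {0}ᶜ)
      (nhds ((1 / 2 : ℂ) *
        ∑ x : V, ∑ y : V,
          if G.Adj x y then ((Gr x y * P x y : ℝ) : ℂ) * Matrix.trace (A x y ^ 2) else 0)) :=
  tendsto_trace_green_perturbation_holonomy_general G κ P hP hPsymm Gr hGr d A hAskew B hB Eβ hEβ
end

section
/- Let 𝒢 be a finite connected simple graph with killing function κ not identically zero whose transition matrix P is symmetric, let d ≥ 1, and let (A_{xy}) be a Hermitian connection on 𝒢. Set E^β = P ⊗ I_d − B^β. Then lim_{β→0} β^{−2} Tr( E^β (G ⊗ I_d) E^β (G ⊗ I_d) ) = −(1/2) Σ_{(x0,x1,x2,x3): x0∼x1, x2∼x3} P_{x0x1} P_{x2x3} Tr(A_{x0x1} A_{x2x3}) (G_{x0x3} G_{x1x2} − G_{x0x2} G_{x1x3}), the sum being over ordered quadruples of vertices with x0 adjacent to x1 and x2 adjacent to x3. -/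
open Matrix Kronecker Filter
open scoped Topology

/-!
Because `P` vanishes off the edges, `E^β` is the block matrix with blocks
`P_{xy} (1 - exp (iβ A_{xy}))`, so `β⁻¹ E^β` tends to the block matrix `L` with blocks
`-i P_{xy} A_{xy}` (the derivative of the matrix exponential at `0`). The normalised trace
therefore tends to
`Tr (L (G ⊗ I) L (G ⊗ I)) = -∑ P_{x0x1} P_{x2x3} Tr (A_{x0x1} A_{x2x3}) G_{x1x2} G_{x3x0}`.
The blocks `P_{xy} A_{xy}` are antisymmetric in `(x, y)`, so exchanging `x2` and `x3` turns the
`G_{x0x2} G_{x1x3}` half of the claimed sum into minus the `G_{x0x3} G_{x1x2}` half.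
-/

theorem tendsto_inv_smul_one_sub_exp_smul {𝕂 𝔸 : Type*} [RCLike 𝕂] [NormedRing 𝔸]
    [NormedAlgebra 𝕂 𝔸] [CompleteSpace 𝔸] (a : 𝔸) :
    Tendsto (fun t : 𝕂 => t⁻¹ • (1 - NormedSpace.exp (t • a))) (𝓝[≠] 0) (𝓝 (-a)) := by
  have h := hasDerivAt_iff_tendsto_slope.mp (hasDerivAt_exp_smul_const a (0 : 𝕂))
  rw [zero_smul, NormedSpace.exp_zero, one_mul] at h
  refine h.neg.congr fun t => ?_
  rw [slope_def_module, zero_smul, NormedSpace.exp_zero, sub_zero, ← smul_neg, neg_sub]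

namespace Matrix

section

attribute [local instance] Matrix.linftyOpNormedRing Matrix.linftyOpNormedAlgebra

theorem tendsto_inv_smul_one_sub_exp_I_mul_smul {n : Type*} [Fintype n] [DecidableEq n]
    (M : Matrix n n ℂ) :
    Tendsto (fun β : ℝ => (β : ℂ)⁻¹ • (1 - NormedSpace.exp ((Complex.I * β) • M)))
      (𝓝[≠] 0) (𝓝 (-(Complex.I • M))) := by
  have hβ : Tendsto (fun β : ℝ => (β : ℂ)) (𝓝[≠] 0) (𝓝[≠] 0) :=
    Complex.continuous_ofReal.continuousWithinAt.tendsto_nhdsWithin fun _ h => by simpa using h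
  refine ((tendsto_inv_smul_one_sub_exp_smul (Complex.I • M)).comp hβ).congr fun β => ?_
  simp only [Function.comp_apply, mul_comm Complex.I, mul_smul]
  -- the `linftyOp` norm induces the product topology, so the two `exp`s agree definitionally
  rfl

end

variable {V n R : Type*}

theorem tendsto_inv_smul_comp_one_sub_exp [Fintype n] [DecidableEq n]
    (w : V → V → ℂ) (A : V → V → Matrix n n ℂ) :
    Tendsto (fun β : ℝ => (β : ℂ)⁻¹ •
        comp V V n n ℂ (of fun x y => w x y • (1 - NormedSpace.exp ((Complex.I * β) • A x y))))
      (𝓝[≠] 0) (𝓝 (comp V V n n ℂ (of fun x y => -(Complex.I • w x y • A x y)))) := by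
  refine tendsto_pi_nhds.2 fun ⟨x, i⟩ => tendsto_pi_nhds.2 fun ⟨y, j⟩ => ?_
  have h := (((tendsto_inv_smul_one_sub_exp_I_mul_smul (A x y)).apply_nhds i).apply_nhds j).const_mul
    (w x y)
  refine (h.congr fun β => ?_).trans_eq (congrArg 𝓝 ?_)
  · simp only [smul_apply, comp_apply, of_apply, smul_eq_mul]
    ring
  · simp only [neg_apply, smul_apply, comp_apply, of_apply, smul_eq_mul]
    ring

theorem tendsto_sq_mul_trace_mul_mul_mul {ι 𝕜 : Type*} [Fintype n] [NormedField 𝕜]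
    {l : Filter ι} {c : ι → 𝕜} {E : ι → Matrix n n 𝕜} {L : Matrix n n 𝕜}
    (h : Tendsto (fun t => c t • E t) l (𝓝 L)) (M N : Matrix n n 𝕜) :
    Tendsto (fun t => c t ^ 2 * trace (E t * M * E t * N)) l (𝓝 (trace (L * M * L * N))) := by
  have hcont : Continuous fun X : Matrix n n 𝕜 => trace (X * M * X * N) := by fun_prop
  refine ((hcont.tendsto L).comp h).congr fun t => ?_
  simp only [Function.comp_apply, smul_mul_assoc, mul_smul_comm, smul_smul, trace_smul,
    smul_eq_mul, sq]

theorem kronecker_one_eq_comp_map_algebraMap [Fintype n] [DecidableEq n] [CommSemiring R]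
    (g : Matrix V V R) :
    g ⊗ₖ (1 : Matrix n n R) = comp V V n n R (g.map (algebraMap R (Matrix n n R))) := by
  ext ⟨x, i⟩ ⟨y, j⟩
  simp [algebraMap_eq_diagonal, one_apply, diagonal_apply]

theorem comp_mul_comp [Fintype V] [Fintype n] [NonUnitalNonAssocSemiring R]
    (M N : Matrix V V (Matrix n n R)) :
    comp V V n n R M * comp V V n n R N = comp V V n n R (M * N) :=
  (map_mul (compRingEquiv V n R) M N).symm

theorem trace_comp [Fintype V] [Fintype n] [AddCommMonoid R] (M : Matrix V V (Matrix n n R)) :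
    trace (comp V V n n R M) = ∑ x, trace (M x x) :=
  Fintype.sum_prod_type _

theorem trace_comp_of_mul_kronecker_one_sq [Fintype V] [Fintype n] [DecidableEq n] [CommRing R]
    (Q : V → V → Matrix n n R) (g : Matrix V V R) :
    trace (comp V V n n R (of Q) * (g ⊗ₖ (1 : Matrix n n R)) * comp V V n n R (of Q) *
        (g ⊗ₖ (1 : Matrix n n R))) =
      ∑ x0, ∑ x1, ∑ x2, ∑ x3, g x1 x2 * g x3 x0 * trace (Q x0 x1 * Q x2 x3) := by
  rw [kronecker_one_eq_comp_map_algebraMap, comp_mul_comp, comp_mul_comp, comp_mul_comp,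
    trace_comp]
  simp only [mul_apply, Finset.sum_mul, trace_sum, map_apply, of_apply,
    Algebra.algebraMap_eq_smul_one, mul_smul_comm, smul_mul_assoc, mul_one, trace_smul,
    smul_eq_mul, Finset.mul_sum]
  refine Finset.sum_congr rfl fun x0 _ => ?_
  rw [Finset.sum_comm]
  conv_rhs => rw [Finset.sum_comm]
  refine Finset.sum_congr rfl fun x2 _ => ?_
  rw [Finset.sum_comm]
  refine Finset.sum_congr rfl fun x1 _ => Finset.sum_congr rfl fun x3 _ => ?_
  ring

theorem sum_trace_mul_mul_sub_of_antisymm [Fintype V] [Fintype n] [CommRing R]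
    {Q : V → V → Matrix n n R} (hQ : ∀ x y, Q y x = -Q x y) {g : Matrix V V R} (hg : g.IsSymm) :
    ∑ x0, ∑ x1, ∑ x2, ∑ x3, trace (Q x0 x1 * Q x2 x3) * (g x0 x3 * g x1 x2 - g x0 x2 * g x1 x3) =
      2 * ∑ x0, ∑ x1, ∑ x2, ∑ x3, g x1 x2 * g x3 x0 * trace (Q x0 x1 * Q x2 x3) := by
  have hswap : ∀ x0 x1, ∑ x2, ∑ x3, trace (Q x0 x1 * Q x2 x3) * (g x0 x2 * g x1 x3) =
      -∑ x2, ∑ x3, trace (Q x0 x1 * Q x2 x3) * (g x0 x3 * g x1 x2) := by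
    intro x0 x1
    rw [Finset.sum_comm, ← Finset.sum_neg_distrib]
    refine Finset.sum_congr rfl fun x3 _ => ?_
    rw [← Finset.sum_neg_distrib]
    refine Finset.sum_congr rfl fun x2 _ => ?_
    rw [hQ x2 x3, Matrix.mul_neg, trace_neg, neg_mul, neg_neg]
  simp only [mul_sub, Finset.sum_sub_distrib, hswap, sub_neg_eq_add, ← two_mul, Finset.mul_sum]
  refine Finset.sum_congr rfl fun x0 _ => Finset.sum_congr rfl fun x1 _ =>
    Finset.sum_congr rfl fun x2 _ => Finset.sum_congr rfl fun x3 _ => ?_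
  rw [hg.apply x0 x3]
  ring

theorem trace_neg_I_smul_mul_neg_I_smul [Fintype n] (X Y : Matrix n n ℂ) :
    trace (-(Complex.I • X) * -(Complex.I • Y)) = -trace (X * Y) := by
  rw [neg_mul_neg, smul_mul_smul_comm, Complex.I_mul_I, neg_one_smul, trace_neg]

end Matrix

theorem SimpleGraph.ofReal_smul_swap_eq_neg {V n : Type*} (G : SimpleGraph V) {P : Matrix V V ℝ}
    (hP : ∀ x y, ¬ G.Adj x y → P x y = 0) (hPsymm : ∀ x y, P x y = P y x)
    {A : V → V → Matrix n n ℂ} (hA : ∀ x y, G.Adj x y → A y x = -A x y) (x y : V) :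
    (P y x : ℂ) • A y x = -((P x y : ℂ) • A x y) := by
  by_cases h : G.Adj x y
  · simp [hA x y h, hPsymm y x]
  · simp [hP x y h, hP y x (mt G.adj_symm h)]

theorem SimpleGraph.kronecker_one_sub_eq_comp {V n : Type*} [DecidableEq n] (G : SimpleGraph V)
    [DecidableRel G.Adj] {P : Matrix V V ℝ} (hP : ∀ x y, ¬ G.Adj x y → P x y = 0)
    (U : V → V → Matrix n n ℂ) {B : Matrix (V × n) (V × n) ℂ}
    (hB : ∀ x y i j, B (x, i) (y, j) = if G.Adj x y then (P x y : ℂ) * U x y i j else 0) :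
    (P.map Complex.ofReal) ⊗ₖ (1 : Matrix n n ℂ) - B =
      comp V V n n ℂ (of fun x y => (P x y : ℂ) • (1 - U x y)) := by
  ext ⟨x, i⟩ ⟨y, j⟩
  by_cases h : G.Adj x y
  · simp [hB, h, one_apply, mul_sub]
  · simp [hB, h, hP x y h]

theorem SimpleGraph.ite_adj_and_adj_eq_trace_smul_mul_smul {V n : Type*} [Fintype n]
    (G : SimpleGraph V) [DecidableRel G.Adj] {P : Matrix V V ℝ}
    (hP : ∀ x y, ¬ G.Adj x y → P x y = 0) (A : V → V → Matrix n n ℂ) (x0 x1 x2 x3 : V) (c : ℂ) :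
    (if G.Adj x0 x1 ∧ G.Adj x2 x3 then
        ((P x0 x1 * P x2 x3 : ℝ) : ℂ) * trace (A x0 x1 * A x2 x3) * c else 0) =
      trace (((P x0 x1 : ℂ) • A x0 x1) * ((P x2 x3 : ℂ) • A x2 x3)) * c := by
  split_ifs with h
  · rw [smul_mul_smul_comm, trace_smul, smul_eq_mul, Complex.ofReal_mul]
  · rcases not_and_or.1 h with h | h <;> simp [hP _ _ h]

theorem tendsto_trace_green_perturbation_sq_holonomy_general
    {V : Type*} [Fintype V] [DecidableEq V]
    (G : SimpleGraph V) [DecidableRel G.Adj]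
    (κ : V → ℝ)
    (P : Matrix V V ℝ)
    (hP : ∀ x y, P x y = if G.Adj x y then 1 / (κ x + (G.degree x : ℝ)) else 0)
    (hPsymm : ∀ x y, P x y = P y x)
    (Gr : Matrix V V ℝ) (hGr : Gr = (1 - P)⁻¹)
    (d : ℕ)
    (A : V → V → Matrix (Fin d) (Fin d) ℂ)
    (hAskew : ∀ x y, G.Adj x y → A y x = - A x y)
    (B : ℝ → Matrix (V × Fin d) (V × Fin d) ℂ)
    (hB : ∀ β x y i j, B β (x, i) (y, j) =
      if G.Adj x y then (P x y : ℂ) * (NormedSpace.exp ((Complex.I * β) • A x y)) i j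
      else 0)
    (Eβ : ℝ → Matrix (V × Fin d) (V × Fin d) ℂ)
    (hEβ : ∀ β, Eβ β = (P.map Complex.ofReal) ⊗ₖ (1 : Matrix (Fin d) (Fin d) ℂ) - B β) :
    Tendsto
      (fun β : ℝ => ((β : ℂ) ^ 2)⁻¹ *
        Matrix.trace
          (Eβ β * ((Gr.map Complex.ofReal) ⊗ₖ (1 : Matrix (Fin d) (Fin d) ℂ)) *
            Eβ β * ((Gr.map Complex.ofReal) ⊗ₖ (1 : Matrix (Fin d) (Fin d) ℂ))))
      (nhdsWithin 0 {0}ᶜ)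
      (nhds (-(1 / 2 : ℂ) *
        ∑ x0 : V, ∑ x1 : V, ∑ x2 : V, ∑ x3 : V,
          if G.Adj x0 x1 ∧ G.Adj x2 x3 then
            ((P x0 x1 * P x2 x3 : ℝ) : ℂ) * Matrix.trace (A x0 x1 * A x2 x3) *
              ((Gr x0 x3 * Gr x1 x2 - Gr x0 x2 * Gr x1 x3 : ℝ) : ℂ)
          else 0)) := by
  have hPz : ∀ x y, ¬ G.Adj x y → P x y = 0 := fun x y h => by simp [hP, h]
  have hg : (Gr.map Complex.ofReal).IsSymm := by
    rw [hGr]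
    exact ((isSymm_one.sub (IsSymm.ext fun x y => hPsymm y x)).inv).map _
  have hE : ∀ β : ℝ, Eβ β = comp V V (Fin d) (Fin d) ℂ
      (of fun x y => (P x y : ℂ) • (1 - NormedSpace.exp ((Complex.I * β) • A x y))) :=
    fun β => (hEβ β).trans (G.kronecker_one_sub_eq_comp hPz _ (hB β))
  have hlim := tendsto_sq_mul_trace_mul_mul_mul
    (by simpa only [← hE] using tendsto_inv_smul_comp_one_sub_exp (fun x y => (P x y : ℂ)) A)
    ((Gr.map Complex.ofReal) ⊗ₖ (1 : Matrix (Fin d) (Fin d) ℂ))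
    ((Gr.map Complex.ofReal) ⊗ₖ (1 : Matrix (Fin d) (Fin d) ℂ))
  rw [trace_comp_of_mul_kronecker_one_sq] at hlim
  convert hlim using 2
  · rw [inv_pow]
  · have hsum := sum_trace_mul_mul_sub_of_antisymm (Q := fun x y => (P x y : ℂ) • A x y)
      (G.ofReal_smul_swap_eq_neg hPz hPsymm hAskew) hg
    simp only [map_apply] at hsum
    simp only [G.ite_adj_and_adj_eq_trace_smul_mul_smul hPz, trace_neg_I_smul_mul_neg_I_smul,
      map_apply]
    simp only [mul_neg, Finset.sum_neg_distrib]
    push_cast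
    rw [hsum]
    ring

/-- With `E^β = P ⊗ I_d - B^β`,
`lim_{β→0} β⁻² Tr(E^β (G ⊗ I_d) E^β (G ⊗ I_d))
  = -(1/2) ∑_{x0∼x1, x2∼x3} P_{x0x1}P_{x2x3} Tr(A_{x0x1}A_{x2x3})
      (G_{x0x3}G_{x1x2} - G_{x0x2}G_{x1x3})`. -/
theorem tendsto_trace_green_perturbation_sq_holonomy
    {V : Type*} [Fintype V] [DecidableEq V]
    (G : SimpleGraph V) [DecidableRel G.Adj] (hconn : G.Connected)
    (κ : V → ℝ) (hκnn : ∀ x, 0 ≤ κ x) (hκ : κ ≠ 0)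
    (P : Matrix V V ℝ)
    (hP : ∀ x y, P x y = if G.Adj x y then 1 / (κ x + (G.degree x : ℝ)) else 0)
    (hPsymm : ∀ x y, P x y = P y x)
    (Gr : Matrix V V ℝ) (hGr : Gr = (1 - P)⁻¹)
    (d : ℕ) (hd : 1 ≤ d)
    (A : V → V → Matrix (Fin d) (Fin d) ℂ)
    (hAherm : ∀ x y, G.Adj x y → (A x y).IsHermitian)
    (hAskew : ∀ x y, G.Adj x y → A y x = - A x y)
    (B : ℝ → Matrix (V × Fin d) (V × Fin d) ℂ)
    (hB : ∀ β x y i j, B β (x, i) (y, j) =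
      if G.Adj x y then (P x y : ℂ) * (NormedSpace.exp ((Complex.I * β) • A x y)) i j
      else 0)
    (Eβ : ℝ → Matrix (V × Fin d) (V × Fin d) ℂ)
    (hEβ : ∀ β, Eβ β = (P.map Complex.ofReal) ⊗ₖ (1 : Matrix (Fin d) (Fin d) ℂ) - B β) :
    Tendsto
      (fun β : ℝ => ((β : ℂ) ^ 2)⁻¹ *
        Matrix.trace
          (Eβ β * ((Gr.map Complex.ofReal) ⊗ₖ (1 : Matrix (Fin d) (Fin d) ℂ)) *
            Eβ β * ((Gr.map Complex.ofReal) ⊗ₖ (1 : Matrix (Fin d) (Fin d) ℂ))))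
      (nhdsWithin 0 {0}ᶜ)
      (nhds (-(1 / 2 : ℂ) *
        ∑ x0 : V, ∑ x1 : V, ∑ x2 : V, ∑ x3 : V,
          if G.Adj x0 x1 ∧ G.Adj x2 x3 then
            ((P x0 x1 * P x2 x3 : ℝ) : ℂ) * Matrix.trace (A x0 x1 * A x2 x3) *
              ((Gr x0 x3 * Gr x1 x2 - Gr x0 x2 * Gr x1 x3 : ℝ) : ℂ)
          else 0)) :=
  tendsto_trace_green_perturbation_sq_holonomy_general G κ P hP hPsymm Gr hGr d A hAskew B hB Eβ hEβ
end
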